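/- Every automorphism of the one-sided full 2-shift is either the identity or the symbol interchange: if h : Σ₂⁺ → Σ₂⁺ is a homeomorphism satisfying h ∘ σ = σ ∘ h, then either h is the identity map or h is the map defined by h(x)_n = 1 − x_n for all n. In particular, the automorphism group of the one-sided full 2-shift is cyclic of order two. -/

import Mathlib

/-- The one-sided full 2-shift space: one-sided sequences over the field `𝔽₂`, with
the product topology (each factor discrete). -/
abbrev Sigma2Plus : Type := ℕ → ZMod 2

/-- The one-sided shift map `σ`: `(σ x) n = x (n+1)`. -/
def shiftMap (x : Sigma2Plus) : Sigma2Plus := fun n => x (n + 1)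

/-!
Since `σ` is two-to-one and `h` commutes with it, `h` maps the two preimages `0t, 1t` of `t`
onto the two preimages of `h t`, so `h (a t) = (a + c t) (h t)` for a continuous rule `c`,
which therefore depends only on finitely many coordinates. The same holds for `h⁻¹` with a
rule `c'`, and `c = c' ∘ h`. If `c` depends on exactly the first `k + 1` coordinates and `c'`
on exactly the first `l + 1`, prepending symbols shows that `c' ∘ h` depends on coordinate
`l + k + 1`, which `c` does not. Hence `c` is constant and `h` is the identity or the flip.
-/

open Set PiNat

theorem Continuous.exists_dependsOn_Iio {A B : Type*} [TopologicalSpace A] [DiscreteTopology A]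
    [CompactSpace A] [TopologicalSpace B] [DiscreteTopology B] {φ : (ℕ → A) → B}
    (hφ : Continuous φ) : ∃ N, DependsOn φ (Iio N) := by
  let U (n : ℕ) : Set (ℕ → A) := {x | ∀ y ∈ cylinder x n, φ y = φ x}
  have hU_open (n : ℕ) : IsOpen (U n) := by
    refine isOpen_iff_forall_mem_open.2 fun x hx => ⟨cylinder x n, fun y hy z hz => ?_,
      isOpen_cylinder _ x n, self_mem_cylinder x n⟩
    rw [mem_cylinder_iff_eq] at hy
    rw [hx z (hy ▸ hz), hx y (mem_cylinder_iff_eq.2 hy)]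
  have hU_cover : univ ⊆ ⋃ n, U n := by
    intro x _
    obtain ⟨_, ⟨y, n, rfl⟩, hxy, hsub⟩ :=
      (isTopologicalBasis_cylinders fun _ : ℕ => A).mem_nhds_iff.1
        (hφ.continuousAt.preimage_mem_nhds (isOpen_discrete {φ x} |>.mem_nhds rfl))
    rw [← mem_cylinder_iff_eq.1 hxy] at hsub
    exact mem_iUnion.2 ⟨n, fun z hz => hsub hz⟩
  have hU_mono : Monotone U := fun m n hmn x hx y hy => hx y (cylinder_anti x hmn hy)
  obtain ⟨N, hN⟩ := isCompact_univ.elim_directed_cover U hU_open hU_cover hU_mono.directed_le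
  exact ⟨N, fun x y hxy => hN (mem_univ y) x fun i hi => hxy i hi⟩

section consSeq

variable {α : Type*}

def consSeq (a : α) (t : ℕ → α) : ℕ → α
  | 0 => a
  | n + 1 => t n

@[simp] lemma consSeq_zero (a : α) (t : ℕ → α) : consSeq a t 0 = a := rfl

lemma consSeq_head_tail (x : ℕ → α) : consSeq (x 0) (fun n => x (n + 1)) = x := by
  funext n; cases n <;> rfl

lemma continuous_consSeq [TopologicalSpace α] (a : α) : Continuous (consSeq a) :=
  continuous_pi fun n => by
    cases n with
    | zero => exact continuous_const
    | succ n => exact continuous_apply n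

lemma dependsOn_Iio_succ_iff {β : Type*} {g : (ℕ → α) → β} {n : ℕ} :
    DependsOn g (Iio (n + 1)) ↔ ∀ a, DependsOn (g ∘ consSeq a) (Iio n) := by
  refine ⟨fun hg a x y hxy => hg fun i hi => ?_, fun hg x y hxy => ?_⟩
  · cases i with
    | zero => rfl
    | succ i => exact hxy i (Nat.succ_lt_succ_iff.1 hi)
  · rw [← consSeq_head_tail x, ← consSeq_head_tail y, hxy 0 (Nat.succ_pos n)]
    exact hg (y 0) fun i hi => hxy (i + 1) (Nat.succ_lt_succ hi)

end consSeq

lemma shiftMap_iterate_apply (n : ℕ) (x : Sigma2Plus) (i : ℕ) :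
    shiftMap^[n] x i = x (i + n) := by
  induction n generalizing x with
  | zero => rfl
  | succ n ih => rw [Function.iterate_succ_apply, ih]; rfl

def localRule (f : Sigma2Plus → Sigma2Plus) (t : Sigma2Plus) : ZMod 2 := f (consSeq 0 t) 0

lemma Continuous.localRule {f : Sigma2Plus → Sigma2Plus} (hf : Continuous f) :
    Continuous (localRule f) :=
  (continuous_apply 0).comp (hf.comp (continuous_consSeq 0))

namespace Function.Commute

variable {f : Sigma2Plus → Sigma2Plus}

lemma apply_eq_apply_zero_shiftMap_iterate (hf : Function.Commute f shiftMap) (x : Sigma2Plus)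
    (n : ℕ) : f x n = f (shiftMap^[n] x) 0 := by
  rw [(hf.iterate_right n).eq, shiftMap_iterate_apply, zero_add]

lemma apply_consSeq (hf : Function.Commute f shiftMap) (a : ZMod 2) (t : Sigma2Plus) :
    f (consSeq a t) = consSeq (f (consSeq a t) 0) (f t) := by
  conv_lhs => rw [← consSeq_head_tail (f (consSeq a t))]
  exact congrArg _ (hf.eq (consSeq a t)).symm

lemma apply_consSeq_eq_add_localRule (hf : Function.Commute f shiftMap)
    (hinj : Function.Injective f) (a : ZMod 2) (t : Sigma2Plus) :
    f (consSeq a t) = consSeq (a + localRule f t) (f t) := by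
  rw [hf.apply_consSeq]
  congr 1
  obtain rfl | rfl : a = 0 ∨ a = 1 := by revert a; decide
  · exact (zero_add _).symm
  · have hne : f (consSeq 1 t) 0 ≠ localRule f t := fun heq => by
      have h10 : consSeq (1 : ZMod 2) t = consSeq 0 t := hinj <| by
        rw [hf.apply_consSeq 1 t, hf.apply_consSeq 0 t, heq]; rfl
      exact one_ne_zero (congrFun h10 0)
    exact (by decide : ∀ b c : ZMod 2, b ≠ c → b = 1 + c) _ _ hne

lemma apply_eq_add_localRule (hf : Function.Commute f shiftMap) (hinj : Function.Injective f)
    (x : Sigma2Plus) (n : ℕ) : f x n = x n + localRule f (shiftMap^[n + 1] x) := by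
  rw [hf.apply_eq_apply_zero_shiftMap_iterate, ← consSeq_head_tail (shiftMap^[n] x),
    hf.apply_consSeq_eq_add_localRule hinj, consSeq_zero, shiftMap_iterate_apply, zero_add,
    Function.iterate_succ_apply']
  rfl

end Function.Commute

lemma localRule_eq_localRule_symm_apply (h : Sigma2Plus ≃ₜ Sigma2Plus)
    (hh : Function.Commute h shiftMap) (z : Sigma2Plus) :
    localRule h z = localRule h.symm (h z) := by
  have hh' : Function.Commute h.symm shiftMap :=
    Function.Semiconj.inverse_left hh h.symm_apply_apply h.apply_symm_apply
  have := congrFun (h.symm_apply_apply (consSeq 0 z)) 0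
  rw [hh.apply_consSeq_eq_add_localRule h.injective,
    hh'.apply_consSeq_eq_add_localRule h.symm.injective, consSeq_zero, zero_add] at this
  exact CharTwo.add_eq_zero.1 this

section LeftPermutive

variable {f : Sigma2Plus → Sigma2Plus} {c : Sigma2Plus → ZMod 2}

lemma not_dependsOn_comp_Iio_succ_of_not_dependsOn
    (hf : ∀ a t, f (consSeq a t) = consSeq (a + c t) (f t)) {k : ℕ}
    (hck : ¬DependsOn c (Iio k)) {g : Sigma2Plus → ZMod 2} (hg : DependsOn g (Iio 1))
    (hg₀ : ¬DependsOn g (Iio 0)) : ¬DependsOn (g ∘ f) (Iio (k + 1)) := by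
  unfold DependsOn at hck hg₀
  push Not at hck hg₀
  obtain ⟨t, t', htt', hctt'⟩ := hck
  obtain ⟨y, y', -, hgyy'⟩ := hg₀
  have hg' {x x' : Sigma2Plus} (h0 : x 0 = x' 0) : g x = g x' :=
    hg fun i hi => by rwa [Nat.lt_one_iff.1 hi]
  have hyy' : y 0 ≠ y' 0 := fun h0 => hgyy' (hg' h0)
  rw [dependsOn_Iio_succ_iff]
  push Not
  refine ⟨y 0 - c t, fun hdep => hgyy' ?_⟩
  calc g y = g (f (consSeq (y 0 - c t) t)) := hg' <| by simp [hf]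
    _ = g (f (consSeq (y 0 - c t) t')) := hdep htt'
    _ = g y' := hg' <| by
        rw [hf, consSeq_zero]
        exact ((by decide : ∀ a a' b b' : ZMod 2, a ≠ a' → b ≠ b' → a' = a - b + b')
          _ _ _ _ hyy' hctt').symm

lemma not_dependsOn_comp_Iio_succ_of_not_dependsOn_comp_consSeq
    (hf : ∀ a t, f (consSeq a t) = consSeq (a + c t) (f t)) {m : ℕ}
    (hc : DependsOn c (Iio m)) {g : Sigma2Plus → ZMod 2} (b : ZMod 2)
    (hgb : ¬DependsOn (g ∘ consSeq b ∘ f) (Iio m)) : ¬DependsOn (g ∘ f) (Iio (m + 1)) := by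
  unfold DependsOn at hgb
  push Not at hgb
  obtain ⟨z, z', hzz', hgzz'⟩ := hgb
  rw [dependsOn_Iio_succ_iff]
  push Not
  -- prepending `b - c z` to `z` or to `z'` makes `f` prepend `b`, as `c z = c z'`
  refine ⟨b - c z, fun hdep => hgzz' ?_⟩
  simpa only [Function.comp_apply, hf, hc hzz', sub_add_cancel] using hdep hzz'

theorem not_dependsOn_comp_Iio (hf : ∀ a t, f (consSeq a t) = consSeq (a + c t) (f t)) {k : ℕ}
    (hc : DependsOn c (Iio (k + 1))) (hck : ¬DependsOn c (Iio k)) {l : ℕ}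
    {g : Sigma2Plus → ZMod 2} (hg : DependsOn g (Iio (l + 1))) (hgl : ¬DependsOn g (Iio l)) :
    ¬DependsOn (g ∘ f) (Iio (l + k + 1)) := by
  induction l generalizing g with
  | zero => simpa using not_dependsOn_comp_Iio_succ_of_not_dependsOn hf hck hg hgl
  | succ l ih =>
    obtain ⟨b, hb⟩ : ∃ b, ¬DependsOn (g ∘ consSeq b) (Iio l) := by
      simpa [dependsOn_Iio_succ_iff] using hgl
    have := not_dependsOn_comp_Iio_succ_of_not_dependsOn_comp_consSeq hf
      (hc.mono (Iio_subset_Iio (by omega))) b (ih (dependsOn_Iio_succ_iff.1 hg b) hb)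
    rwa [Nat.add_right_comm l 1 k]

end LeftPermutive

lemma localRule_dependsOn_empty (h : Sigma2Plus ≃ₜ Sigma2Plus)
    (hh : Function.Commute h shiftMap) : DependsOn (localRule h) ∅ := by
  have hrule : localRule h = localRule h.symm ∘ h :=
    funext (localRule_eq_localRule_symm_apply h hh)
  by_contra hc₀
  rw [← Iio_zero_eq_empty] at hc₀
  have hc'₀ : ¬DependsOn (localRule h.symm) (Iio 0) := fun hc' => hc₀ <| by
    rw [hrule]; exact fun x y _ => hc' (by simp)
  obtain ⟨k, hck, hck₁⟩ := Nat.exists_not_and_succ_of_not_zero_of_exists hc₀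
    h.continuous.localRule.exists_dependsOn_Iio
  obtain ⟨l, hcl, hcl₁⟩ := Nat.exists_not_and_succ_of_not_zero_of_exists hc'₀
    h.symm.continuous.localRule.exists_dependsOn_Iio
  have hc'h : DependsOn (localRule h.symm ∘ h) (Iio (l + k + 1)) :=
    hrule ▸ hck₁.mono (Iio_subset_Iio (by omega))
  exact not_dependsOn_comp_Iio (hh.apply_consSeq_eq_add_localRule h.injective) hck₁ hck hcl₁ hcl
    hc'h

theorem eq_self_or_eq_one_sub_of_commute_shiftMap (h : Sigma2Plus ≃ₜ Sigma2Plus)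
    (hh : Function.Commute h shiftMap) : (∀ x, h x = x) ∨ (∀ x n, h x n = 1 - x n) := by
  have hrule (x : Sigma2Plus) (n : ℕ) : h x n = x n + localRule h 0 := by
    rw [hh.apply_eq_add_localRule h.injective, (localRule_dependsOn_empty h hh).empty _ 0]
  obtain h0 | h1 : localRule h 0 = 0 ∨ localRule h 0 = 1 := by
    generalize localRule h 0 = a; revert a; decide
  · exact .inl fun x => funext fun n => by rw [hrule, h0, add_zero]
  · exact .inr fun x n => by rw [hrule, h1, CharTwo.sub_eq_add, add_comm]

theorem card_commute_shiftMap :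
    Nat.card {h : Sigma2Plus ≃ₜ Sigma2Plus // Function.Commute h shiftMap} = 2 := by
  rw [Nat.card_eq_two_iff' ⟨Homeomorph.refl _, fun _ => rfl⟩]
  refine ⟨⟨Homeomorph.subLeft 1, fun _ => rfl⟩, fun heq => ?_, fun ⟨h, hh⟩ hne => ?_⟩
  · have := congrFun (congrArg (fun h : {h : Sigma2Plus ≃ₜ Sigma2Plus // _} => h.1 0) heq) 0
    simp at this
  · refine Subtype.ext (Homeomorph.ext fun x => ?_)
    rcases eq_self_or_eq_one_sub_of_commute_shiftMap h hh with hid | hflip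
    · exact absurd (Subtype.ext (Homeomorph.ext hid)) hne
    · exact funext (hflip x)

/-- Every automorphism of the one-sided full 2-shift is the identity or the symbol
interchange `x ↦ (1 − x_n)ₙ`; in particular, the automorphism group of the one-sided
full 2-shift has exactly two elements (so it is cyclic of order two). -/
theorem one_sided_shift_automorphisms :
    (∀ h : Sigma2Plus ≃ₜ Sigma2Plus, (∀ x, h (shiftMap x) = shiftMap (h x)) →
      (∀ x, h x = x) ∨ (∀ x n, h x n = 1 - x n)) ∧
    Nat.card {h : Sigma2Plus ≃ₜ Sigma2Plus // ∀ x, h (shiftMap x) = shiftMap (h x)} = 2 :=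
  ⟨eq_self_or_eq_one_sub_of_commute_shiftMap, card_commute_shiftMap⟩
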